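/- arXiv:2404.10656 — 3 statements merged into one kernel-verified Lean document; each statement's English description precedes it below -/
import Mathlib

section
/- Let M = P_T(M1,M2) be the generalized parallel connection of M1 and M2 along T, with rank functions r, r1, r2 respectively. Then for every flat F of M, one has r(F) = r1(F ∩ E1) + r2(F ∩ E2) − r1(F ∩ T). -/
open Matroid Set

variable {α : Type*}

/-- The rank of a set `X` in a matroid `M`: the supremum of the cardinalities of the
independent subsets of `X`. -/
noncomputable def mRk (M : Matroid α) (X : Set α) : ℕ :=
  sSup {n : ℕ | ∃ I, M.Indep I ∧ I ⊆ X ∧ I.ncard = n}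

/-- The rank of a matroid `M`. -/
noncomputable def mRank (M : Matroid α) : ℕ := mRk M M.E

/-- `T` is a modular flat of `M`: `T` is a flat and
`r(T) + r(F) = r(T ∩ F) + r(T ∪ F)` holds for every flat `F` of `M`. -/
def IsModFlat (M : Matroid α) (T : Set α) : Prop :=
  M.IsFlat T ∧ ∀ F, M.IsFlat F → mRk M T + mRk M F = mRk M (T ∩ F) + mRk M (T ∪ F)

/-- `H` is a hyperplane of `M`: a flat of rank `r(M) - 1`. -/
def IsHyp (M : Matroid α) (H : Set α) : Prop :=
  M.IsFlat H ∧ mRk M H + 1 = mRank M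

/-- `F` is a corank-2 flat of `M`: a flat of rank `r(M) - 2`. -/
def IsCr2Flat (M : Matroid α) (F : Set α) : Prop :=
  M.IsFlat F ∧ mRk M F + 2 = mRank M

/-- `F` is a corank-3 flat of `M`: a flat of rank `r(M) - 3`. -/
def IsCr3Flat (M : Matroid α) (F : Set α) : Prop :=
  M.IsFlat F ∧ mRk M F + 3 = mRank M

/-- `(H1, H2, H3)` is a modular triple of hyperplanes of `M`: the three sets are
hyperplanes, `F = H1 ∩ H2 ∩ H3` is a corank-2 flat, and `Hi ∩ Hj = F` for all `i ≠ j`. -/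
def ModTriple (M : Matroid α) (H1 H2 H3 : Set α) : Prop :=
  IsHyp M H1 ∧ IsHyp M H2 ∧ IsHyp M H3 ∧
  IsCr2Flat M (H1 ∩ H2 ∩ H3) ∧
  H1 ∩ H2 = H1 ∩ H2 ∩ H3 ∧ H1 ∩ H3 = H1 ∩ H2 ∩ H3 ∧ H2 ∩ H3 = H1 ∩ H2 ∩ H3

/-- `M` is the generalized parallel connection of `M1` and `M2`: its ground set is
`M1.E ∪ M2.E`, and its flats are exactly the sets `F ⊆ M1.E ∪ M2.E` such that
`F ∩ M1.E` is a flat of `M1` and `F ∩ M2.E` is a flat of `M2`. -/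
def IsGPC (M1 M2 M : Matroid α) : Prop :=
  M.E = M1.E ∪ M2.E ∧
    ∀ F : Set α, M.IsFlat F ↔ F ⊆ M1.E ∪ M2.E ∧ M1.IsFlat (F ∩ M1.E) ∧ M2.IsFlat (F ∩ M2.E)

/-- The deletion `M \ D` of a set `D` from `M`. -/
def mDelete (M : Matroid α) (D : Set α) : Matroid α := M ↾ (M.E \ D)

/-- The contraction `M / C`, obtained via duality as `(M✶ \ C)✶`. -/
def mContract (M : Matroid α) (C : Set α) : Matroid α := (M✶ ↾ (M.E \ C))✶

/-- `N` is a minor of `M`: `N` is obtained from `M` by a contraction followed by a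
deletion. -/
def MinorOf (N M : Matroid α) : Prop :=
  ∃ C D : Set α, C ⊆ M.E ∧ D ⊆ M.E ∧ Disjoint C D ∧
    N = (mContract M C) ↾ ((M.E \ C) \ D)

/-- `C` is a circuit of `M`: a minimal dependent subset of the ground set. -/
def MCircuit (M : Matroid α) (C : Set α) : Prop :=
  C ⊆ M.E ∧ ¬ M.Indep C ∧ ∀ D ⊂ C, M.Indep D

/-- `e` is a loop of `M`. -/
def MLoop (M : Matroid α) (e : α) : Prop := e ∈ M.E ∧ ¬ M.Indep {e}

/-- `e` is a coloop of `M`: an element of the ground set lying in every base. -/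
def MColoop (M : Matroid α) (e : α) : Prop := e ∈ M.E ∧ ∀ B, M.IsBase B → e ∈ B

/-- `M` is simple: every subset of the ground set with at most two elements is
independent; equivalently, `M` has no loops and no two-element circuits. -/
def MSimple (M : Matroid α) : Prop := ∀ S ⊆ M.E, S.ncard ≤ 2 → M.Indep S

/-- `X` is co-independent in `M`: the complement `M.E \ X` is spanning. -/
def MCoindep (M : Matroid α) (X : Set α) : Prop := M.Spanning (M.E \ X)

/-- The connected component of `M` containing `e`: the set of `f` in the ground set with
`e = f` or some circuit containing both `e` and `f`. -/
def MComponentOf (M : Matroid α) (e : α) : Set α :=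
  {f | f ∈ M.E ∧ (e = f ∨ ∃ C, MCircuit M C ∧ e ∈ C ∧ f ∈ C)}

/-- `K` is a connected component of `M`. -/
def MComponent (M : Matroid α) (K : Set α) : Prop :=
  ∃ e ∈ M.E, K = MComponentOf M e

/-- The restriction `M|X` is (isomorphic to) the rank-2 uniform matroid `U_{2,n}`:
`X` is an `n`-element subset of the ground set and a subset of `X` is independent
exactly when it has at most 2 elements. -/
def RestrIsU2 (M : Matroid α) (X : Set α) (n : ℕ) : Prop :=
  X ⊆ M.E ∧ X.ncard = n ∧ ∀ S ⊆ X, (M.Indep S ↔ S.ncard ≤ 2)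

/-- `Θ` is a copy of the matroid `Θ_n`, with `X = {x 1, …, x n}` and `Y = {y 1, …, y n}`
disjoint, whose bases are exactly `Y`, the sets `(Y \ {y i}) ∪ {x j}` for `i ≠ j`, and
the sets `(Y \ Y') ∪ X'` with `Y' ⊆ Y`, `X' ⊆ X`, `|Y'| = |X'| = 2`. -/
def IsTheta (n : ℕ) (x y : Fin n → α) (Θ : Matroid α) : Prop :=
  Function.Injective x ∧ Function.Injective y ∧ (∀ i j, x i ≠ y j) ∧
  Θ.E = Set.range x ∪ Set.range y ∧
  ∀ B : Set α, Θ.IsBase B ↔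
    (B = Set.range y ∨
    (∃ i j, i ≠ j ∧ B = (Set.range y \ {y i}) ∪ {x j}) ∨
    (∃ P Q : Set (Fin n), P.ncard = 2 ∧ Q.ncard = 2 ∧
      B = (Set.range y \ (y '' P)) ∪ x '' Q))

/-- `M` is representable over the field `K`: there is a map from the ground set to a
`K`-vector space under which a subset of the ground set is independent in `M` exactly
when its image (as a family) is linearly independent. -/
def RepOver (K : Type*) [Field K] {α : Type*} (M : Matroid α) : Prop :=
  ∃ (V : Type) (_ : AddCommGroup V) (_ : Module K V) (φ : α → V),
    ∀ I ⊆ M.E, (M.Indep I ↔ LinearIndependent K (fun e : I => φ e.1))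


section AuxRank

private lemma mRk_bddAbove (M : Matroid α) [M.Finite] (X : Set α) :
    BddAbove {n : ℕ | ∃ I, M.Indep I ∧ I ⊆ X ∧ I.ncard = n} := by
  refine ⟨M.E.ncard, ?_⟩
  rintro n ⟨I, hI, -, rfl⟩
  exact Set.ncard_le_ncard hI.subset_ground M.ground_finite

private lemma le_mRk {M : Matroid α} [M.Finite] {I X : Set α} (hI : M.Indep I) (hIX : I ⊆ X) :
    I.ncard ≤ mRk M X :=
  le_csSup (mRk_bddAbove M X) ⟨I, hI, hIX, rfl⟩

private lemma mRk_le {M : Matroid α} {X : Set α} {n : ℕ}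
    (h : ∀ I, M.Indep I → I ⊆ X → I.ncard ≤ n) : mRk M X ≤ n :=
  csSup_le ⟨0, ∅, M.empty_indep, Set.empty_subset X, Set.ncard_empty α⟩
    (by rintro m ⟨I, hI, hIX, rfl⟩; exact h I hI hIX)

private lemma basis_mRk_eq {M : Matroid α} [M.Finite] {I X : Set α} (hI : M.IsBasis I X) :
    mRk M X = I.ncard := by
  refine le_antisymm (mRk_le fun J hJ hJX => ?_) (le_mRk hI.indep hI.subset)
  obtain ⟨J', hJ', hJJ'⟩ := hJ.subset_isBasis_of_subset hJX hI.subset_ground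
  have h1 : J'.ncard = I.ncard := by
    rw [Set.ncard_def, Set.ncard_def, hJ'.encard_eq_encard hI]
  have h2 : J.ncard ≤ J'.ncard :=
    Set.ncard_le_ncard hJJ' (M.set_finite J' hJ'.indep.subset_ground)
  omega

private lemma mRk_lt_flat {M : Matroid α} [M.Finite] {G G' : Set α}
    (hG : M.IsFlat G) (hG' : M.IsFlat G') (hss : G ⊂ G') : mRk M G < mRk M G' := by
  obtain ⟨I, hI⟩ := M.exists_isBasis G hG.subset_ground
  obtain ⟨e, heG', heG⟩ := exists_of_ssubset hss
  have heI : e ∉ I := fun h => heG (hI.subset h)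
  have hins : M.Indep (insert e I) := by
    rw [hI.indep.insert_indep_iff_of_notMem heI]
    exact ⟨hG'.subset_ground heG', by rw [hI.closure_eq_closure, hG.closure]; exact heG⟩
  have hle := le_mRk hins (insert_subset heG' (hI.subset.trans hss.subset))
  rw [Set.ncard_insert_of_notMem heI (M.set_finite I hI.indep.subset_ground)] at hle
  rw [basis_mRk_eq hI]
  omega

private lemma closure_subset_flat {M : Matroid α} {F X : Set α} (hF : M.IsFlat F) (hXF : X ⊆ F) :
    M.closure X ⊆ F := by
  rw [Matroid.closure_def]
  exact Set.sInter_subset_of_mem ⟨hF, Set.inter_subset_left.trans hXF⟩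

private lemma flat_closure (M : Matroid α) (X : Set α) : M.IsFlat (M.closure X) := by
  have hne : Nonempty ({F | M.IsFlat F ∧ X ∩ M.E ⊆ F} : Set (Set α)) :=
    ⟨⟨M.E, M.ground_isFlat, Set.inter_subset_right⟩⟩
  have h : M.closure X = ⋂ (F : ({F | M.IsFlat F ∧ X ∩ M.E ⊆ F} : Set (Set α))), F.1 := by
    rw [Matroid.closure_def, Set.sInter_eq_iInter]
  rw [h]
  exact Matroid.IsFlat.iInter fun F => F.2.1

end AuxRank

/-- Rank formula for flats of the generalized parallel connection:
`r(F) = r1(F ∩ E1) + r2(F ∩ E2) − r1(F ∩ T)` for every flat `F` of `M = P_T(M1, M2)`. -/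
theorem gpc_flat_rank (M1 M2 M : Matroid α) [M1.Finite] [M2.Finite]
    (E1 E2 T : Set α) (hE1 : M1.E = E1) (hE2 : M2.E = E2) (hT : T = E1 ∩ E2)
    (hres : M1 ↾ T = M2 ↾ T) (hmod : IsModFlat M2 T)
    (hM : IsGPC M1 M2 M) :
    ∀ F : Set α, M.IsFlat F →
      mRk M F + mRk M1 (F ∩ T) = mRk M1 (F ∩ E1) + mRk M2 (F ∩ E2) := by
  obtain ⟨hME, hMflat⟩ := hM
  subst hE1 hE2
  have hTE1 : T ⊆ M1.E := by rw [hT]; exact inter_subset_left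
  have hTE2 : T ⊆ M2.E := by rw [hT]; exact inter_subset_right
  haveI hMfin : M.Finite := ⟨by rw [hME]; exact M1.ground_finite.union M2.ground_finite⟩
  -- independence transfer on subsets of T
  have hindepT : ∀ S, S ⊆ T → (M1.Indep S ↔ M2.Indep S) := by
    intro S hS
    have h1 : (M1 ↾ T).Indep S ↔ M1.Indep S ∧ S ⊆ T := restrict_indep_iff
    have h2 : (M2 ↾ T).Indep S ↔ M2.Indep S ∧ S ⊆ T := restrict_indep_iff
    rw [hres] at h1
    tauto
  -- basis transfer on subsets of T
  have hbasisT : ∀ I S, S ⊆ T → M2.IsBasis I S → M1.IsBasis I S := by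
    intro I S hS h
    have h' : (M2 ↾ T).IsBasis I S := (isBasis_restrict_iff hTE2).mpr ⟨h, hS⟩
    rw [← hres] at h'
    exact ((isBasis_restrict_iff hTE1).mp h').1
  -- closure transfer: flats of M2 inside T are closed in M1 relative to T
  have hclT : ∀ S, M2.IsFlat S → S ⊆ T → M1.closure S ∩ T = S := by
    intro S hS hST
    obtain ⟨I, hI2⟩ := M2.exists_isBasis S (hST.trans hTE2)
    have hI1 : M1.IsBasis I S := hbasisT I S hST hI2
    refine subset_antisymm ?_ (subset_inter (M1.subset_closure S (hST.trans hTE1)) hST)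
    rintro e ⟨he1, heT⟩
    by_cases heI : e ∈ I
    · exact hI2.subset heI
    have hnot1 : ¬ M1.Indep (insert e I) := by
      rw [hI1.indep.insert_indep_iff_of_notMem heI]
      rintro ⟨-, hecl⟩
      exact hecl (by rwa [hI1.closure_eq_closure])
    have hnot2 : ¬ M2.Indep (insert e I) := by
      rw [← hindepT _ (insert_subset heT (hI2.subset.trans hST))]; exact hnot1
    rw [hI2.indep.insert_indep_iff_of_notMem heI] at hnot2
    have hecl2 : e ∈ M2.closure I := by
      by_contra hc; exact hnot2 ⟨hTE2 heT, hc⟩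
    rw [hI2.closure_eq_closure, hS.closure] at hecl2
    exact hecl2
  -- intersections with T of M2-flats are M2-flats
  have hflatBT : ∀ B, M2.IsFlat B → M2.IsFlat (B ∩ T) := by
    intro B hB
    rw [Set.inter_eq_iInter]
    refine Matroid.IsFlat.iInter (fun b => ?_)
    cases b
    · simpa using hmod.1
    · simpa using hB
  -- building flats of M from compatible pairs
  have hmk : ∀ A B, M1.IsFlat A → M2.IsFlat B → A ∩ T = B ∩ T → M.IsFlat (A ∪ B) := by
    intro A B hA hB hAB
    have hBE1 : B ∩ M1.E = B ∩ T := by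
      rw [hT]
      ext e
      exact ⟨fun ⟨h1, h2⟩ => ⟨h1, h2, hB.subset_ground h1⟩, fun ⟨h1, h2, _⟩ => ⟨h1, h2⟩⟩
    have hAE2 : A ∩ M2.E = A ∩ T := by
      rw [hT]
      ext e
      exact ⟨fun ⟨h1, h2⟩ => ⟨h1, hA.subset_ground h1, h2⟩, fun ⟨h1, _, h2⟩ => ⟨h1, h2⟩⟩
    refine (hMflat _).2 ⟨union_subset_union hA.subset_ground hB.subset_ground, ?_, ?_⟩
    · rw [union_inter_distrib_right, inter_eq_left.mpr hA.subset_ground, hBE1, ← hAB,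
        union_eq_self_of_subset_right inter_subset_left]
      exact hA
    · rw [union_inter_distrib_right, inter_eq_left.mpr hB.subset_ground, hAE2, hAB,
        union_eq_self_of_subset_left inter_subset_left]
      exact hB
  intro F hF
  obtain ⟨hFE, hF1, hF2⟩ := (hMflat F).1 hF
  -- set identities
  have hF1T : (F ∩ M1.E) ∩ T = F ∩ T := by
    rw [hT]; ext e
    exact ⟨fun ⟨⟨h1, _⟩, h3⟩ => ⟨h1, h3⟩, fun ⟨h1, h3⟩ => ⟨⟨h1, h3.1⟩, h3⟩⟩
  have hF2T : (F ∩ M2.E) ∩ T = F ∩ T := by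
    rw [hT]; ext e
    exact ⟨fun ⟨⟨h1, _⟩, h3⟩ => ⟨h1, h3⟩, fun ⟨h1, h3⟩ => ⟨⟨h1, h3.2⟩, h3⟩⟩
  have hFun : F = (F ∩ M1.E) ∪ (F ∩ M2.E) := by
    ext e
    constructor
    · intro he
      rcases hFE he with h | h
      · exact Or.inl ⟨he, h⟩
      · exact Or.inr ⟨he, h⟩
    · rintro (⟨he, -⟩ | ⟨he, -⟩) <;> exact he
  -- bases
  have hFTE1 : F ∩ T ⊆ M1.E := inter_subset_right.trans hTE1
  obtain ⟨IT, hIT⟩ := M1.exists_isBasis (F ∩ T) hFTE1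
  have hITT : IT ⊆ T := hIT.subset.trans inter_subset_right
  have hITF1 : IT ⊆ F ∩ M1.E := hIT.subset.trans (inter_subset_inter_right F hTE1)
  obtain ⟨J1, hJ1, hITJ1⟩ := hIT.indep.subset_isBasis_of_subset hITF1 inter_subset_right
  have hIT2 : M2.Indep IT := (hindepT IT hITT).1 hIT.indep
  obtain ⟨B2, hB2, hITB2⟩ := hIT2.subset_isBasis_of_subset
    (hIT.subset.trans (inter_subset_inter_right F hTE2)) inter_subset_right
  have hJ1fin : J1.Finite := M1.set_finite J1 hJ1.indep.subset_ground
  have hB2fin : B2.Finite := M2.set_finite B2 hB2.indep.subset_ground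
  have hITfin : IT.Finite := M1.set_finite IT hIT.indep.subset_ground
  have hr1 : mRk M1 (F ∩ M1.E) = J1.ncard := basis_mRk_eq hJ1
  have hr2 : mRk M2 (F ∩ M2.E) = B2.ncard := basis_mRk_eq hB2
  have hrT : mRk M1 (F ∩ T) = IT.ncard := basis_mRk_eq hIT
  have hJ1T : J1 ∩ T = IT := by
    refine (hIT.eq_of_subset_indep (hJ1.indep.subset inter_subset_left)
      (subset_inter hITJ1 hITT) ?_).symm
    exact hF1T ▸ inter_subset_inter_left T hJ1.subset
  have hJ1B2 : J1 ∩ B2 = IT := by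
    refine subset_antisymm ?_ (subset_inter hITJ1 hITB2)
    rintro e ⟨heJ, heB⟩
    have heT : e ∈ T := by
      rw [hT]
      exact ⟨hJ1.indep.subset_ground heJ, hB2.indep.subset_ground heB⟩
    exact hJ1T ▸ (⟨heJ, heT⟩ : e ∈ J1 ∩ T)
  -- Upper bound : J1 ∪ B2 spans F in M
  have hXE : J1 ∪ B2 ⊆ M.E := by
    rw [hME]
    exact union_subset (hJ1.indep.subset_ground.trans subset_union_left)
      (hB2.indep.subset_ground.trans subset_union_right)
  have hXF : J1 ∪ B2 ⊆ F := union_subset (hJ1.subset.trans inter_subset_left)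
    (hB2.subset.trans inter_subset_left)
  have hclX : M.closure (J1 ∪ B2) = F := by
    refine subset_antisymm (closure_subset_flat hF hXF) ?_
    have hG := flat_closure M (J1 ∪ B2)
    obtain ⟨hGE, hG1, hG2⟩ := (hMflat _).1 hG
    have hsub : J1 ∪ B2 ⊆ M.closure (J1 ∪ B2) := M.subset_closure _ hXE
    have hF1G : F ∩ M1.E ⊆ M.closure (J1 ∪ B2) := by
      refine hJ1.subset_closure.trans ((closure_subset_flat hG1 ?_).trans inter_subset_left)
      exact subset_inter (subset_union_left.trans hsub) hJ1.indep.subset_ground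
    have hF2G : F ∩ M2.E ⊆ M.closure (J1 ∪ B2) := by
      refine hB2.subset_closure.trans ((closure_subset_flat hG2 ?_).trans inter_subset_left)
      exact subset_inter (subset_union_right.trans hsub) hB2.indep.subset_ground
    rw [hFun]
    exact union_subset hF1G hF2G
  obtain ⟨IX, hIX⟩ := M.exists_isBasis (J1 ∪ B2) hXE
  have hIXF : M.IsBasis IX F := hclX ▸ hIX.isBasis_closure_right
  have hub : mRk M F + IT.ncard ≤ J1.ncard + B2.ncard := by
    have hcard : (J1 ∪ B2).ncard + (J1 ∩ B2).ncard = J1.ncard + B2.ncard :=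
      Set.ncard_union_add_ncard_inter J1 B2 hJ1fin hB2fin
    rw [hJ1B2] at hcard
    have h1 : mRk M F ≤ (J1 ∪ B2).ncard := by
      rw [basis_mRk_eq hIXF]
      exact Set.ncard_le_ncard hIX.subset (hJ1fin.union hB2fin)
    omega
  -- Lower bound, phase 1
  have phase1 : ∀ n (K : Set α), K ⊆ B2 → K.ncard = n →
      K.ncard ≤ mRk M (M1.closure (M2.closure K ∩ T) ∪ M2.closure K) := by
    intro n
    induction n with
    | zero => intro K _ h0; exact h0 ▸ Nat.zero_le _
    | succ n ih =>
      intro K hK hcard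
      have hKfin : K.Finite := hB2fin.subset hK
      obtain ⟨a, haK⟩ : K.Nonempty := (Set.ncard_pos hKfin).1 (by omega)
      have hK0 : K \ {a} ⊆ B2 := diff_subset.trans hK
      have hcard0 : (K \ {a}).ncard = n := by
        rw [Set.ncard_diff_singleton_of_mem haK]; omega
      have hstep := ih (K \ {a}) hK0 hcard0
      have hflat0 : M.IsFlat (M1.closure (M2.closure (K \ {a}) ∩ T) ∪ M2.closure (K \ {a})) :=
        hmk _ _ (flat_closure M1 _) (flat_closure M2 _)
          (hclT _ (hflatBT _ (flat_closure M2 _)) inter_subset_right)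
      have hflat1 : M.IsFlat (M1.closure (M2.closure K ∩ T) ∪ M2.closure K) :=
        hmk _ _ (flat_closure M1 _) (flat_closure M2 _)
          (hclT _ (hflatBT _ (flat_closure M2 _)) inter_subset_right)
      have hmono : M1.closure (M2.closure (K \ {a}) ∩ T) ∪ M2.closure (K \ {a}) ⊆
          M1.closure (M2.closure K ∩ T) ∪ M2.closure K :=
        union_subset_union
          (M1.closure_subset_closure (inter_subset_inter_left T
            (M2.closure_subset_closure diff_subset)))
          (M2.closure_subset_closure diff_subset)
      have haE2 : a ∈ M2.E := hB2.indep.subset_ground (hK haK)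
      have hacl : a ∈ M2.closure K := M2.subset_closure K (hK.trans hB2.indep.subset_ground) haK
      have hanot2 : a ∉ M2.closure (K \ {a}) :=
        (hB2.indep.subset hK).notMem_closure_diff_of_mem haK
      have hanot : a ∉ M1.closure (M2.closure (K \ {a}) ∩ T) ∪ M2.closure (K \ {a}) := by
        rintro (h | h)
        · have haT : a ∈ T := by
            rw [hT]; exact ⟨M1.closure_subset_ground _ h, haE2⟩
          have hmem : a ∈ M1.closure (M2.closure (K \ {a}) ∩ T) ∩ T := ⟨h, haT⟩
          rw [hclT _ (hflatBT _ (flat_closure M2 (K \ {a}))) inter_subset_right] at hmem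
          exact hanot2 hmem.1
        · exact hanot2 h
      have hss := (Set.ssubset_iff_of_subset hmono).2 ⟨a, Or.inr hacl, hanot⟩
      have := mRk_lt_flat hflat0 hflat1 hss
      omega
  have hlow1 : B2.ncard ≤ mRk M (M1.closure (F ∩ T) ∪ (F ∩ M2.E)) := by
    have := phase1 B2.ncard B2 Subset.rfl rfl
    rwa [hB2.closure_eq_closure, hF2.closure, hF2T] at this
  -- Lower bound, phase 2
  have hcompat2 : ∀ K, K ⊆ J1 \ IT → M1.closure (IT ∪ K) ∩ T = F ∩ T := by
    intro K hK
    have hsub1 : IT ∪ K ⊆ F ∩ M1.E :=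
      union_subset hITF1 ((hK.trans diff_subset).trans hJ1.subset)
    refine subset_antisymm ?_ (subset_inter
      (hIT.subset_closure.trans (M1.closure_subset_closure subset_union_left))
      inter_subset_right)
    have h1 : M1.closure (IT ∪ K) ⊆ F ∩ M1.E := by
      have := M1.closure_subset_closure hsub1
      rwa [hF1.closure] at this
    exact hF1T ▸ inter_subset_inter_left T h1
  have phase2 : ∀ n (K : Set α), K ⊆ J1 \ IT → K.ncard = n →
      B2.ncard + K.ncard ≤ mRk M (M1.closure (IT ∪ K) ∪ (F ∩ M2.E)) := by
    intro n
    induction n with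
    | zero =>
      intro K hK h0
      have hKe : K = ∅ := (Set.ncard_eq_zero (hJ1fin.subset (hK.trans diff_subset))).1 h0
      subst hKe
      rw [union_empty, hIT.closure_eq_closure, h0, add_zero]
      exact hlow1
    | succ n ih =>
      intro K hK hcard
      have hKfin : K.Finite := hJ1fin.subset (hK.trans diff_subset)
      obtain ⟨a, haK⟩ : K.Nonempty := (Set.ncard_pos hKfin).1 (by omega)
      have hK0 : K \ {a} ⊆ J1 \ IT := diff_subset.trans hK
      have hcard0 : (K \ {a}).ncard = n := by
        rw [Set.ncard_diff_singleton_of_mem haK]; omega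
      have hstep := ih (K \ {a}) hK0 hcard0
      have hflat0 : M.IsFlat (M1.closure (IT ∪ (K \ {a})) ∪ (F ∩ M2.E)) :=
        hmk _ _ (flat_closure M1 _) hF2 (by rw [hcompat2 _ hK0, hF2T])
      have hflat1 : M.IsFlat (M1.closure (IT ∪ K) ∪ (F ∩ M2.E)) :=
        hmk _ _ (flat_closure M1 _) hF2 (by rw [hcompat2 _ hK, hF2T])
      have hmono : M1.closure (IT ∪ (K \ {a})) ∪ (F ∩ M2.E) ⊆
          M1.closure (IT ∪ K) ∪ (F ∩ M2.E) :=
        union_subset_union_left _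
          (M1.closure_subset_closure (union_subset_union_right IT diff_subset))
      have haJ1 : a ∈ J1 := (hK haK).1
      have hsubJa : IT ∪ (K \ {a}) ⊆ J1 \ {a} := by
        refine union_subset (fun e he => ⟨hITJ1 he, ?_⟩)
          (fun e he => ⟨(hK0 he).1, he.2⟩)
        rintro rfl
        exact (hK haK).2 he
      have hanot1 : a ∉ M1.closure (IT ∪ (K \ {a})) := fun h =>
        hJ1.indep.notMem_closure_diff_of_mem haJ1 (M1.closure_subset_closure hsubJa h)
      have hacl : a ∈ M1.closure (IT ∪ K) :=
        M1.subset_closure _ (union_subset hIT.indep.subset_ground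
          ((hK.trans diff_subset).trans hJ1.indep.subset_ground)) (Or.inr haK)
      have hanot : a ∉ M1.closure (IT ∪ (K \ {a})) ∪ (F ∩ M2.E) := by
        rintro (h | h)
        · exact hanot1 h
        · have haT : a ∈ T := by
            rw [hT]; exact ⟨hJ1.indep.subset_ground haJ1, h.2⟩
          have haFT : a ∈ F ∩ T := ⟨h.1, haT⟩
          exact hanot1 (hIT.subset_closure.trans
            (M1.closure_subset_closure subset_union_left) haFT)
      have hss := (Set.ssubset_iff_of_subset hmono).2 ⟨a, Or.inl hacl, hanot⟩
      have := mRk_lt_flat hflat0 hflat1 hss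
      omega
  have hlow : B2.ncard + (J1 \ IT).ncard ≤ mRk M F := by
    have := phase2 (J1 \ IT).ncard (J1 \ IT) Subset.rfl rfl
    rwa [union_diff_cancel hITJ1, hJ1.closure_eq_closure, hF1.closure, ← hFun] at this
  have hdiff : (J1 \ IT).ncard + IT.ncard = J1.ncard :=
    Set.ncard_diff_add_ncard_of_subset hITJ1 hJ1fin
  rw [hr1, hr2, hrT]
  omega
end

section
/- Let M = P_T(M1,M2) be the generalized parallel connection of M1 and M2 along T. Then the rank of M equals r(M1) + r(M2) − r(M1|T), where M1|T denotes the restriction of M1 to T. -/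
open Matroid Set

variable {α : Type*}

namespace GPCaux

variable {M : Matroid α} {I J X Y F F' : Set α}

lemma flat_closure (M : Matroid α) (X : Set α) : M.IsFlat (M.closure X) := by
  rw [Matroid.closure_def]
  have hne : ({F | M.IsFlat F ∧ X ∩ M.E ⊆ F} : Set (Set α)).Nonempty :=
    ⟨M.E, M.ground_isFlat, inter_subset_right⟩
  have := hne.coe_sort
  rw [sInter_eq_iInter]
  exact Matroid.IsFlat.iInter fun F ↦ F.2.1

lemma flat_of_closure_subset (h : M.closure F ⊆ F) (hFE : F ⊆ M.E) : M.IsFlat F := by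
  have h2 : M.closure F = F := le_antisymm h (M.subset_closure F hFE)
  rw [← h2]; exact flat_closure M F

lemma ncard_le_ncard_basis' [M.Finite] (hI : M.IsBasis' I X) (hJ : M.Indep J) (hJX : J ⊆ X) :
    J.ncard ≤ I.ncard := by
  obtain ⟨J', hJ', hJJ'⟩ := hJ.subset_isBasis'_of_subset hJX
  have h1 : J'.encard = I.encard := hJ'.encard_eq_encard hI
  have hJ'fin : J'.Finite := M.set_finite J' hJ'.indep.subset_ground
  calc J.ncard ≤ J'.ncard := Set.ncard_le_ncard hJJ' hJ'fin
    _ = I.ncard := by rw [Set.ncard_def, h1, ← Set.ncard_def]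

lemma mRk_eq_ncard_basis' [M.Finite] (hI : M.IsBasis' I X) : mRk M X = I.ncard := by
  apply le_antisymm
  · refine csSup_le ⟨0, ∅, M.empty_indep, empty_subset X, by simp⟩ ?_
    rintro n ⟨J, hJ, hJX, rfl⟩
    exact ncard_le_ncard_basis' hI hJ hJX
  · refine le_csSup ⟨I.ncard, ?_⟩ ⟨I, hI.indep, hI.subset, rfl⟩
    rintro n ⟨J, hJ, hJX, rfl⟩
    exact ncard_le_ncard_basis' hI hJ hJX

lemma mRk_eq_ncard_basis [M.Finite] (hI : M.IsBasis I X) : mRk M X = I.ncard :=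
  mRk_eq_ncard_basis' hI.isBasis'

lemma ncard_le_mRk [M.Finite] (hJ : M.Indep J) (hJX : J ⊆ X) : J.ncard ≤ mRk M X := by
  obtain ⟨I, hI⟩ := M.exists_isBasis' X
  rw [mRk_eq_ncard_basis' hI]
  exact ncard_le_ncard_basis' hI hJ hJX

lemma mRk_mono [M.Finite] (hXY : X ⊆ Y) : mRk M X ≤ mRk M Y := by
  obtain ⟨I, hI⟩ := M.exists_isBasis' X
  rw [mRk_eq_ncard_basis' hI]
  exact ncard_le_mRk hI.indep (hI.subset.trans hXY)

lemma mRk_lt [M.Finite] (hF : M.IsFlat F) (hss : F ⊂ F') (hF'E : F' ⊆ M.E) :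
    mRk M F + 1 ≤ mRk M F' := by
  obtain ⟨e, heF', heF⟩ := exists_of_ssubset hss
  obtain ⟨I, hI⟩ := M.exists_isBasis F hF.subset_ground
  have heI : e ∉ I := fun h => heF (hI.subset h)
  have hecl : e ∉ M.closure I := by
    rw [hI.closure_eq_closure, hF.closure]; exact heF
  have hins : M.Indep (insert e I) :=
    (hI.indep.insert_indep_iff_of_notMem heI).2 ⟨hF'E heF', hecl⟩
  have hIfin : I.Finite := M.set_finite I hI.indep.subset_ground
  have hle := ncard_le_mRk hins (insert_subset heF' (hI.subset.trans hss.subset))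
  rw [Set.ncard_insert_of_notMem heI hIfin] at hle
  rw [mRk_eq_ncard_basis hI]
  omega

lemma mRk_restrict_self (M : Matroid α) (T : Set α) : mRk (M ↾ T) T = mRk M T := by
  unfold mRk
  congr 1
  ext n
  constructor
  · rintro ⟨I, hI, hIT, rfl⟩
    exact ⟨I, (Matroid.restrict_indep_iff.1 hI).1, hIT, rfl⟩
  · rintro ⟨I, hI, hIT, rfl⟩
    exact ⟨I, Matroid.restrict_indep_iff.2 ⟨hI, hIT⟩, hIT, rfl⟩

end GPCaux

/-- The rank of the generalized parallel connection `M = P_T(M1, M2)`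
equals `r(M1) + r(M2) − r(M1|T)`. -/
theorem gpc_rank (M1 M2 M : Matroid α) [M1.Finite] [M2.Finite]
    (E1 E2 T : Set α) (hE1 : M1.E = E1) (hE2 : M2.E = E2) (hT : T = E1 ∩ E2)
    (hres : M1 ↾ T = M2 ↾ T) (hmod : IsModFlat M2 T)
    (hM : IsGPC M1 M2 M) :
    mRank M + mRank (M1 ↾ T) = mRank M1 + mRank M2 := by
  obtain ⟨hTflat, hmodeq⟩ := hmod
  obtain ⟨hME, hMflat⟩ := hM
  subst hE1; subst hE2; subst hT
  set T := M1.E ∩ M2.E with hT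
  haveI hMfin : M.Finite := ⟨by rw [hME]; exact M1.ground_finite.union M2.ground_finite⟩
  have hTE1 : T ⊆ M1.E := inter_subset_left
  have hTE2 : T ⊆ M2.E := inter_subset_right
  have hindT : ∀ I : Set α, I ⊆ T → (M1.Indep I ↔ M2.Indep I) := by
    intro I hIT
    constructor
    · intro h
      have h2 : (M1 ↾ T).Indep I := restrict_indep_iff.2 ⟨h, hIT⟩
      rw [hres] at h2
      exact (restrict_indep_iff.1 h2).1
    · intro h
      have h2 : (M2 ↾ T).Indep I := restrict_indep_iff.2 ⟨h, hIT⟩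
      rw [← hres] at h2
      exact (restrict_indep_iff.1 h2).1
  have hflatT : ∀ G, M1.IsFlat G → M2.IsFlat (G ∩ T) := by
    intro G hG
    refine GPCaux.flat_of_closure_subset (fun x hx => ?_) (inter_subset_right.trans hTE2)
    have hxT : x ∈ T := by
      have h2 := M2.closure_subset_closure (inter_subset_right (s := G) (t := T))
      rw [hTflat.closure] at h2
      exact h2 hx
    obtain ⟨I, hI⟩ := M2.exists_isBasis (G ∩ T) (inter_subset_right.trans hTE2)
    have hIT : I ⊆ T := hI.subset.trans inter_subset_right
    have hI1 : M1.Indep I := (hindT I hIT).2 hI.indep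
    have hxclI : x ∈ M2.closure I := by rwa [hI.closure_eq_closure]
    have hx1 : x ∈ M1.closure I := by
      rw [hI1.mem_closure_iff']
      refine ⟨hTE1 hxT, fun hins => ?_⟩
      have hins2 : M2.Indep (insert x I) := (hindT _ (insert_subset hxT hIT)).1 hins
      exact ((hI.indep.mem_closure_iff').1 hxclI).2 hins2
    have hxG : x ∈ M1.closure G :=
      M1.closure_subset_closure (hI.subset.trans inter_subset_left) hx1
    rw [hG.closure] at hxG
    exact ⟨hxG, hxT⟩
  have hGM : ∀ G, M1.IsFlat G → M.IsFlat G := by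
    intro G hG
    rw [hMflat]
    have hGE1 : G ⊆ M1.E := hG.subset_ground
    refine ⟨hGE1.trans subset_union_left, ?_, ?_⟩
    · rw [inter_eq_self_of_subset_left hGE1]; exact hG
    · have heq : G ∩ M2.E = G ∩ T := by
        ext x
        constructor
        · rintro ⟨h1, h2⟩; exact ⟨h1, hGE1 h1, h2⟩
        · rintro ⟨h1, _, h3⟩; exact ⟨h1, h3⟩
      rw [heq]; exact hflatT G hG
  have hE1M : M.IsFlat M1.E := hGM _ M1.ground_isFlat
  have hHM : ∀ H, M2.IsFlat H → T ⊆ H → M.IsFlat (M1.E ∪ H) := by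
    intro H hH hTH
    rw [hMflat]
    refine ⟨union_subset_union_right _ hH.subset_ground, ?_, ?_⟩
    · have heq : (M1.E ∪ H) ∩ M1.E = M1.E := by
        ext x
        constructor
        · rintro ⟨_, h⟩; exact h
        · intro h; exact ⟨Or.inl h, h⟩
      rw [heq]; exact M1.ground_isFlat
    · have heq : (M1.E ∪ H) ∩ M2.E = H := by
        apply subset_antisymm
        · rintro x ⟨hx1 | hxH, hx2⟩
          · exact hTH ⟨hx1, hx2⟩
          · exact hxH
        · exact subset_inter (fun x hx => Or.inr hx) hH.subset_ground
      rw [heq]; exact hH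
  have hphi : ∀ F F', M.IsFlat F → M.IsFlat F' → F ⊂ F' →
      mRk M1 (F ∩ M1.E) + mRk M2 (T ∪ F ∩ M2.E) + 1 ≤
      mRk M1 (F' ∩ M1.E) + mRk M2 (T ∪ F' ∩ M2.E) := by
    intro F F' hF hF' hss
    obtain ⟨hFsub, hF1, hF2⟩ := (hMflat F).1 hF
    obtain ⟨hF'sub, hF'1, hF'2⟩ := (hMflat F').1 hF'
    have hs1 : F ∩ M1.E ⊆ F' ∩ M1.E := inter_subset_inter_left _ hss.subset
    have hs2 : F ∩ M2.E ⊆ F' ∩ M2.E := inter_subset_inter_left _ hss.subset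
    by_cases h1 : F ∩ M1.E = F' ∩ M1.E
    · have h2 : F ∩ M2.E ≠ F' ∩ M2.E := by
        intro h2
        apply hss.ne
        apply subset_antisymm hss.subset
        intro x hx
        rcases hF'sub hx with hx1 | hx2
        · have hm : x ∈ F ∩ M1.E := by rw [h1]; exact ⟨hx, hx1⟩
          exact hm.1
        · have hm : x ∈ F ∩ M2.E := by rw [h2]; exact ⟨hx, hx2⟩
          exact hm.1
      have hTeq : T ∩ (F ∩ M2.E) = T ∩ (F' ∩ M2.E) := by
        ext x
        constructor
        · rintro ⟨hxT, hxF, hx2⟩; exact ⟨hxT, hss.subset hxF, hx2⟩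
        · rintro ⟨hxT, hxF', hx2⟩
          have hm : x ∈ F ∩ M1.E := by rw [h1]; exact ⟨hxF', hxT.1⟩
          exact ⟨hxT, hm.1, hx2⟩
      have hss2 : F ∩ M2.E ⊂ F' ∩ M2.E := hs2.ssubset_of_ne h2
      have hstrict : mRk M2 (F ∩ M2.E) + 1 ≤ mRk M2 (F' ∩ M2.E) :=
        GPCaux.mRk_lt hF2 hss2 inter_subset_right
      have m1 := hmodeq _ hF2
      have m2 := hmodeq _ hF'2
      rw [hTeq] at m1
      have hmono : mRk M1 (F ∩ M1.E) = mRk M1 (F' ∩ M1.E) := by rw [h1]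
      omega
    · have hss1 : F ∩ M1.E ⊂ F' ∩ M1.E := hs1.ssubset_of_ne h1
      have hstrict : mRk M1 (F ∩ M1.E) + 1 ≤ mRk M1 (F' ∩ M1.E) :=
        GPCaux.mRk_lt hF1 hss1 inter_subset_right
      have hmono : mRk M2 (T ∪ F ∩ M2.E) ≤ mRk M2 (T ∪ F' ∩ M2.E) :=
        GPCaux.mRk_mono (union_subset_union_right _ hs2)
      omega
  -- upper bound
  have hub : ∀ n (I : Set α), M.Indep I → I.ncard = n →
      n + mRk M2 T ≤ mRk M1 (M.closure I ∩ M1.E) + mRk M2 (T ∪ M.closure I ∩ M2.E) := by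
    intro n
    induction n with
    | zero =>
      intro I _ _
      have := GPCaux.mRk_mono (M := M2)
        (subset_union_left (s := T) (t := M.closure I ∩ M2.E))
      omega
    | succ n ih =>
      intro I hI hcard
      have hIfin : I.Finite := M.set_finite I hI.subset_ground
      obtain ⟨e, heI⟩ := Set.nonempty_of_ncard_ne_zero (s := I) (by omega)
      have hI' : M.Indep (I \ {e}) := hI.subset diff_subset
      have hcard' : (I \ {e}).ncard = n := by
        rw [Set.ncard_diff_singleton_of_mem heI]; omega
      have hssub : M.closure (I \ {e}) ⊂ M.closure I := by
        refine (M.closure_subset_closure diff_subset).ssubset_of_ne ?_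
        intro h
        apply hI.notMem_closure_diff_of_mem heI
        rw [h]
        exact M.mem_closure_of_mem' heI (hI.subset_ground heI)
      have hstep := hphi _ _ (GPCaux.flat_closure M (I \ {e})) (GPCaux.flat_closure M I) hssub
      have hih := ih _ hI' hcard'
      omega
  -- lower bound part 1
  have hlow1 : ∀ n (I : Set α), M1.Indep I → I.ncard = n → n ≤ mRk M (M1.closure I) := by
    intro n
    induction n with
    | zero => exact fun I _ _ => Nat.zero_le _
    | succ n ih =>
      intro I hI hcard
      have hIfin : I.Finite := M1.set_finite I hI.subset_ground
      obtain ⟨e, heI⟩ := Set.nonempty_of_ncard_ne_zero (s := I) (by omega)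
      have hssub : M1.closure (I \ {e}) ⊂ M1.closure I := by
        refine (M1.closure_subset_closure diff_subset).ssubset_of_ne ?_
        intro h
        apply hI.notMem_closure_diff_of_mem heI
        rw [h]
        exact M1.mem_closure_of_mem' heI (hI.subset_ground heI)
      have hstep := GPCaux.mRk_lt (M := M) (hGM _ (GPCaux.flat_closure M1 (I \ {e}))) hssub
        (by rw [hME]; exact (M1.closure_subset_ground I).trans subset_union_left)
      have hih := ih (I \ {e}) (hI.subset diff_subset)
        (by rw [Set.ncard_diff_singleton_of_mem heI]; omega)
      omega
  -- lower bound part 2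
  obtain ⟨BT, hBT⟩ := M2.exists_isBasis T hTE2
  have hBTcl : M2.closure BT = T := by rw [hBT.closure_eq_closure, hTflat.closure]
  have hlow2 : ∀ n (J : Set α), M2.Indep J → BT ⊆ J → (J \ BT).ncard = n →
      mRk M M1.E + n ≤ mRk M (M1.E ∪ M2.closure J) := by
    intro n
    induction n with
    | zero =>
      intro J hJ hBTJ hcard
      have hJfin : J.Finite := M2.set_finite J hJ.subset_ground
      have hJBT : J = BT := by
        apply subset_antisymm ?_ hBTJ
        have h0 := (Set.ncard_eq_zero (hJfin.diff (t := BT))).1 hcard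
        rwa [diff_eq_empty] at h0
      rw [hJBT, hBTcl, union_eq_self_of_subset_right hTE1]
      omega
    | succ n ih =>
      intro J hJ hBTJ hcard
      have hJfin : J.Finite := M2.set_finite J hJ.subset_ground
      obtain ⟨e, heJBT⟩ := Set.nonempty_of_ncard_ne_zero (s := J \ BT) (by omega)
      have heJ : e ∈ J := heJBT.1
      have heBT : e ∉ BT := heJBT.2
      have hJ' : M2.Indep (J \ {e}) := hJ.subset diff_subset
      have hBTJ' : BT ⊆ J \ {e} := fun x hx =>
        ⟨hBTJ hx, fun hxe => heBT (by rwa [Set.mem_singleton_iff.1 hxe] at hx)⟩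
      have hcard' : ((J \ {e}) \ BT).ncard = n := by
        have heq : (J \ {e}) \ BT = (J \ BT) \ {e} := by
          ext x; simp only [mem_diff, mem_singleton_iff]; tauto
        rw [heq, Set.ncard_diff_singleton_of_mem heJBT]
        omega
      have hTcl' : T ⊆ M2.closure (J \ {e}) := by
        rw [← hBTcl]; exact M2.closure_subset_closure hBTJ'
      have hssub : M1.E ∪ M2.closure (J \ {e}) ⊂ M1.E ∪ M2.closure J := by
        refine (union_subset_union_right _ (M2.closure_subset_closure diff_subset)).ssubset_of_ne ?_
        intro h
        have hecl : e ∈ M1.E ∪ M2.closure J :=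
          Or.inr (M2.subset_closure J hJ.subset_ground heJ)
        rw [← h] at hecl
        rcases hecl with he1 | he2
        · have heT : e ∈ T := ⟨he1, hJ.subset_ground heJ⟩
          exact hJ.notMem_closure_diff_of_mem heJ (hTcl' heT)
        · exact hJ.notMem_closure_diff_of_mem heJ he2
      have hstep := GPCaux.mRk_lt (M := M)
        (hHM _ (GPCaux.flat_closure M2 (J \ {e})) hTcl') hssub
        (by rw [hME]; exact union_subset_union_right _ (M2.closure_subset_ground J))
      have hih := ih (J \ {e}) hJ' hBTJ' hcard'
      omega
  -- assemble
  obtain ⟨B, hB⟩ := M.exists_isBase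
  have hBcard : mRk M M.E = B.ncard := GPCaux.mRk_eq_ncard_basis hB.isBasis_ground
  have hupper := hub B.ncard B hB.indep rfl
  rw [hB.closure_eq, hME] at hupper
  have he1 : (M1.E ∪ M2.E) ∩ M1.E = M1.E := by
    ext x; exact ⟨fun h => h.2, fun h => ⟨Or.inl h, h⟩⟩
  have he2 : (M1.E ∪ M2.E) ∩ M2.E = M2.E := by
    ext x; exact ⟨fun h => h.2, fun h => ⟨Or.inr h, h⟩⟩
  have he3 : T ∪ M2.E = M2.E := union_eq_self_of_subset_left hTE2
  rw [he1, he2, he3] at hupper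
  obtain ⟨B1, hB1⟩ := M1.exists_isBase
  obtain ⟨B2, hB2, hBTB2⟩ := hBT.indep.exists_isBase_superset
  have hl1 := hlow1 B1.ncard B1 hB1.indep rfl
  rw [hB1.closure_eq] at hl1
  have hl2 := hlow2 (B2 \ BT).ncard B2 hB2.indep hBTB2 rfl
  rw [hB2.closure_eq, ← hME] at hl2
  have hB2fin : B2.Finite := M2.set_finite B2 hB2.subset_ground
  have hcardd : (B2 \ BT).ncard = B2.ncard - BT.ncard :=
    Set.ncard_diff hBTB2 (hB2fin.subset hBTB2)
  have hBTle : BT.ncard ≤ B2.ncard := Set.ncard_le_ncard hBTB2 hB2fin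
  have hrT : mRank (M1 ↾ T) = mRk M2 T := by
    rw [hres]; exact GPCaux.mRk_restrict_self M2 T
  have hrTB : mRk M2 T = BT.ncard := GPCaux.mRk_eq_ncard_basis hBT
  have hr1 : mRank M1 = B1.ncard := GPCaux.mRk_eq_ncard_basis hB1.isBasis_ground
  have hr2 : mRank M2 = B2.ncard := GPCaux.mRk_eq_ncard_basis hB2.isBasis_ground
  have hrM : mRank M = mRk M M.E := rfl
  have hrM1 : mRank M1 = mRk M1 M1.E := rfl
  have hrM2 : mRank M2 = mRk M2 M2.E := rfl
  omega
end

section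
/- Let M1 and M2 be matroids on E1 and E2 with X = E1 ∩ E2, such that M1|X = M2|X, X is a modular flat of M2, and M2|X is isomorphic to the rank-2 uniform matroid U_{2,n} for some n ≥ 2. A subset H ⊆ E1 ∪ E2 is a hyperplane of P_X(M1,M2) if and only if: (1) E1 ⊆ H and H ∩ E2 is a hyperplane of M2 containing X; or (2) E2 ⊆ H and H ∩ E1 is a hyperplane of M1 containing X; or (3) H ∩ E_i is a hyperplane of M_i for i = 1,2 and |H ∩ X| = 1; or (4) H ∩ E1 is a hyperplane of M1 disjoint from X, and H ∩ E2 is a corank-2 flat of M2 disjoint from X. -/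
open Matroid Set

variable {α : Type*}

set_option linter.unusedSectionVars false

section RankTheory

variable {N : Matroid α} [N.Finite] {S T F G H I B : Set α}

lemma indep_finite (hI : N.Indep I) : I.Finite :=
  N.ground_finite.subset hI.subset_ground

lemma ncard_le_of_indep_of_basis' (hI : N.Indep I) (hIS : I ⊆ S) (hB : N.IsBasis' B S) :
    I.ncard ≤ B.ncard := by
  obtain ⟨J, hJ, hIJ⟩ := hI.subset_isBasis'_of_subset hIS
  have h1 : I.ncard ≤ J.ncard := ncard_le_ncard hIJ (indep_finite hJ.indep)
  have h2 : J.encard = B.encard := hJ.encard_eq_encard hB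
  have h3 : J.ncard = B.ncard := by
    rw [ncard_def, h2, ← ncard_def]
  omega

lemma mRk_eq_of_basis' (hB : N.IsBasis' B S) : mRk N S = B.ncard := by
  have hne : {n : ℕ | ∃ I, N.Indep I ∧ I ⊆ S ∧ I.ncard = n}.Nonempty :=
    ⟨0, ⟨∅, N.empty_indep, empty_subset _, by simp⟩⟩
  apply le_antisymm
  · refine csSup_le hne ?_
    rintro n ⟨I, hI, hIS, rfl⟩
    exact ncard_le_of_indep_of_basis' hI hIS hB
  · apply le_csSup
    · refine ⟨N.E.ncard, ?_⟩
      rintro n ⟨I, hI, hIS, rfl⟩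
      exact ncard_le_ncard hI.subset_ground N.ground_finite
    · exact ⟨B, hB.indep, hB.subset, rfl⟩

lemma mRk_le_of_indep_subset (hI : N.Indep I) (hIS : I ⊆ S) : I.ncard ≤ mRk N S := by
  obtain ⟨B, hB⟩ := N.exists_isBasis' S
  rw [mRk_eq_of_basis' hB]
  exact ncard_le_of_indep_of_basis' hI hIS hB

lemma mRk_mono (hST : S ⊆ T) : mRk N S ≤ mRk N T := by
  obtain ⟨B, hB⟩ := N.exists_isBasis' S
  rw [mRk_eq_of_basis' hB]
  exact mRk_le_of_indep_subset hB.indep (hB.subset.trans hST)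

lemma mRk_closure_eq (N : Matroid α) [N.Finite] (S : Set α) :
    mRk N (N.closure S) = mRk N S := by
  obtain ⟨B, hB⟩ := N.exists_isBasis' S
  rw [mRk_eq_of_basis' hB, mRk_eq_of_basis' hB.isBasis_closure_right.isBasis']

lemma mRk_le_mRank (N : Matroid α) [N.Finite] (S : Set α) : mRk N S ≤ mRank N := by
  obtain ⟨B, hB⟩ := N.exists_isBasis' S
  rw [mRk_eq_of_basis' hB]
  exact mRk_le_of_indep_subset hB.indep hB.indep.subset_ground

lemma mRk_insert_le (N : Matroid α) [N.Finite] (e : α) (S : Set α) :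
    mRk N (insert e S) ≤ mRk N S + 1 := by
  obtain ⟨B, hB⟩ := N.exists_isBasis' (insert e S)
  rw [mRk_eq_of_basis' hB]
  have h1 : B \ {e} ⊆ S := by
    intro x hx
    rcases hB.subset hx.1 with h | h
    · exact absurd h hx.2
    · exact h
  have h2 : (B \ {e}).ncard ≤ mRk N S :=
    mRk_le_of_indep_subset (hB.indep.subset diff_subset) h1
  have h3 : B.ncard ≤ (B \ {e}).ncard + 1 := by
    by_cases he : e ∈ B
    · rw [ncard_diff_singleton_add_one he (indep_finite hB.indep)]
    · rw [diff_singleton_eq_self he]; omega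
  omega

lemma mRk_empty (N : Matroid α) [N.Finite] : mRk N (∅ : Set α) = 0 := by
  obtain ⟨B, hB⟩ := N.exists_isBasis' ∅
  rw [mRk_eq_of_basis' hB, ncard_eq_zero (indep_finite hB.indep)]
  exact subset_empty_iff.mp hB.subset

lemma mRk_singleton_of_indep (he : N.Indep {e}) : mRk N ({e} : Set α) = 1 := by
  have h1 : 1 ≤ mRk N {e} := by
    have := mRk_le_of_indep_subset he (subset_refl _)
    simpa using this
  have h2 : mRk N {e} ≤ 1 := by
    obtain ⟨B, hB⟩ := N.exists_isBasis' {e}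
    rw [mRk_eq_of_basis' hB]
    calc B.ncard ≤ ({e} : Set α).ncard := ncard_le_ncard hB.subset (finite_singleton e)
    _ = 1 := ncard_singleton e
  omega

/-- Strict monotonicity of rank on flats. -/
lemma mRk_lt_of_flat_ssubset (hF : N.IsFlat F) (hG : N.IsFlat G) (hFG : F ⊂ G) :
    mRk N F + 1 ≤ mRk N G := by
  obtain ⟨B, hB⟩ := N.exists_isBasis' F
  obtain ⟨e, heG, heF⟩ := exists_of_ssubset hFG
  have hclB : N.closure B = F := by
    rw [hB.closure_eq_closure, hF.closure]
  have heB : e ∉ N.closure B := by rw [hclB]; exact heF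
  have hei : N.Indep (insert e B) := by
    rw [hB.indep.insert_indep_iff]
    exact Or.inl ⟨hG.subset_ground heG, heB⟩
  have hsub : insert e B ⊆ G := insert_subset heG (hB.subset.trans hFG.subset)
  have hcard : (insert e B).ncard = B.ncard + 1 := by
    rw [ncard_insert_of_notMem (fun h => heF (hB.subset h)) (indep_finite hB.indep)]
  have := mRk_le_of_indep_subset hei hsub
  rw [hcard] at this
  rw [mRk_eq_of_basis' hB]
  omega

lemma flat_eq_ground_of_mRank_le (hF : N.IsFlat F) (h : mRank N ≤ mRk N F) : F = N.E := by
  by_contra hne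
  have := mRk_lt_of_flat_ssubset hF N.ground_isFlat (ssubset_of_ne_of_subset hne hF.subset_ground)
  have h2 : mRk N N.E = mRank N := rfl
  omega


section HypTheory

lemma closure_flat' (N : Matroid α) (X : Set α) : N.IsFlat (N.closure X) := by
  rw [Matroid.closure_def, sInter_eq_iInter]
  have hne : Nonempty {F // F ∈ {F | N.IsFlat F ∧ X ∩ N.E ⊆ F}} :=
    ⟨⟨N.E, N.ground_isFlat, inter_subset_right⟩⟩
  exact Matroid.IsFlat.iInter (fun F => F.2.1)

variable {N : Matroid α} [N.Finite] {F G H : Set α}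

lemma IsHyp.ne_ground (hH : IsHyp N H) : H ≠ N.E := by
  intro h
  have h1 : mRk N H = mRank N := by rw [h]; rfl
  have h2 := hH.2
  omega

lemma IsHyp.eq_ground_of_flat_ssuperset (hH : IsHyp N H) (hG : N.IsFlat G) (hHG : H ⊂ G) :
    G = N.E := by
  have h1 := mRk_lt_of_flat_ssubset hH.1 hG hHG
  have h2 := hH.2
  exact flat_eq_ground_of_mRank_le hG (by omega)

lemma isHyp_of_maximal_proper_flat (hH : N.IsFlat H) (hne : H ≠ N.E)
    (hmax : ∀ G, N.IsFlat G → H ⊂ G → G = N.E) : IsHyp N H := by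
  refine ⟨hH, ?_⟩
  have hssub : H ⊂ N.E := ssubset_of_ne_of_subset hne hH.subset_ground
  have hlt := mRk_lt_of_flat_ssubset hH N.ground_isFlat hssub
  obtain ⟨e, heE, heH⟩ := exists_of_ssubset hssub
  set G := N.closure (insert e H) with hGdef
  have hGflat : N.IsFlat G := closure_flat' N _
  have hHG : H ⊂ G := by
    refine ssubset_of_ne_of_subset (fun h => ?_) ?_
    · have : e ∈ G := N.mem_closure_of_mem (mem_insert e H) (insert_subset heE hH.subset_ground)
      rw [← h] at this; exact heH this
    · exact (N.subset_closure H hH.subset_ground).trans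
        (N.closure_subset_closure (subset_insert e H))
  have hGE : G = N.E := hmax G hGflat hHG
  have h2 : mRank N = mRk N (insert e H) := by
    rw [mRank, ← hGE, hGdef, mRk_closure_eq N (insert e H)]
  have h3 := mRk_insert_le N e H
  have h4 : mRk N H ≤ mRank N := mRk_le_mRank N H
  have h5 : mRank N = mRk N N.E := rfl
  omega

end HypTheory

section SetLemmas

lemma union_inter_eq_left {A B Ea Eb : Set α} (hA : A ⊆ Ea) (hB : B ⊆ Eb)
    (hagr : A ∩ (Ea ∩ Eb) = B ∩ (Ea ∩ Eb)) : (A ∪ B) ∩ Ea = A := by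
  apply subset_antisymm
  · rintro x ⟨hx | hx, hxE⟩
    · exact hx
    · have hmem : x ∈ B ∩ (Ea ∩ Eb) := ⟨hx, hxE, hB hx⟩
      rw [← hagr] at hmem
      exact hmem.1
  · exact fun x hx => ⟨Or.inl hx, hA hx⟩

lemma union_inter_eq_right {A B Ea Eb : Set α} (hA : A ⊆ Ea) (hB : B ⊆ Eb)
    (hagr : A ∩ (Ea ∩ Eb) = B ∩ (Ea ∩ Eb)) : (A ∪ B) ∩ Eb = B := by
  apply subset_antisymm
  · rintro x ⟨hx | hx, hxE⟩
    · have hmem : x ∈ A ∩ (Ea ∩ Eb) := ⟨hx, hA hx, hxE⟩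
      rw [hagr] at hmem
      exact hmem.1
    · exact hx
  · exact fun x hx => ⟨Or.inr hx, hB hx⟩

end SetLemmas

section U2

variable {MM : Matroid α} [MM.Finite] {X F : Set α}

lemma u2_spread (hXE : X ⊆ MM.E) (hind : ∀ S ⊆ X, (MM.Indep S ↔ S.ncard ≤ 2))
    (hF : MM.IsFlat F) {a b : α} (haF : a ∈ F) (haX : a ∈ X) (hbF : b ∈ F) (hbX : b ∈ X)
    (hab : a ≠ b) : X ⊆ F := by
  intro x hx
  rcases eq_or_ne x a with rfl | hxa
  · exact haF
  rcases eq_or_ne x b with rfl | hxb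
  · exact hbF
  have habX : ({a, b} : Set α) ⊆ X := by rintro y (rfl | rfl) <;> assumption
  have hXfin : X.Finite := MM.ground_finite.subset hXE
  have hpair : MM.Indep {a, b} := by
    rw [hind _ habX, ncard_pair hab]
  have htrip : ¬ MM.Indep (insert x {a, b}) := by
    rw [hind _ (insert_subset hx habX),
      ncard_insert_of_notMem (by simp [hxa, hxb]) (hXfin.subset habX), ncard_pair hab]
    omega
  have hdep : MM.Dep (insert x {a, b}) :=
    ⟨htrip, insert_subset (hXE hx) (habX.trans hXE)⟩
  have hmem : x ∈ MM.closure {a, b} := hpair.mem_closure_iff.mpr (Or.inl hdep)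
  have hsub : MM.closure {a, b} ⊆ F := by
    have h1 := MM.closure_subset_closure (show ({a, b} : Set α) ⊆ F by
      rintro y (rfl | rfl) <;> assumption)
    rwa [hF.closure] at h1
  exact hsub hmem

lemma u2_trichotomy (hXE : X ⊆ MM.E) (hind : ∀ S ⊆ X, (MM.Indep S ↔ S.ncard ≤ 2))
    (hF : MM.IsFlat F) : F ∩ X = ∅ ∨ (∃ z ∈ X, F ∩ X = {z}) ∨ X ⊆ F := by
  by_cases hs : (F ∩ X).Subsingleton
  · rcases hs.eq_empty_or_singleton with h | ⟨z, hz⟩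
    · exact Or.inl h
    · refine Or.inr (Or.inl ⟨z, ?_, hz⟩)
      have : z ∈ F ∩ X := by rw [hz]; rfl
      exact this.2
  · rw [Set.not_subsingleton_iff] at hs
    obtain ⟨a, ⟨haF, haX⟩, b, ⟨hbF, hbX⟩, hab⟩ := hs
    exact Or.inr (Or.inr (u2_spread hXE hind hF haF haX hbF hbX hab))

lemma u2_rk (hXE : X ⊆ MM.E) (hind : ∀ S ⊆ X, (MM.Indep S ↔ S.ncard ≤ 2))
    (h2 : 2 ≤ X.ncard) : mRk MM X = 2 := by
  have hXfin : X.Finite := MM.ground_finite.subset hXE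
  obtain ⟨a, haX, b, hbX, hab⟩ := (Set.one_lt_ncard hXfin).mp (by omega)
  have habX : ({a, b} : Set α) ⊆ X := by rintro y (rfl | rfl) <;> assumption
  have hpair : MM.Indep {a, b} := by rw [hind _ habX, ncard_pair hab]
  have hge := mRk_le_of_indep_subset hpair habX
  rw [ncard_pair hab] at hge
  obtain ⟨B, hB⟩ := MM.exists_isBasis' X
  have hle := (hind B hB.subset).mp hB.indep
  rw [mRk_eq_of_basis' hB]
  rw [mRk_eq_of_basis' hB] at hge
  omega

end U2

/-- Hyperplanes of the generalized parallel connection `P_X(M1, M2)`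
when `X = E1 ∩ E2` is a modular flat of `M2` with `M2|X ≅ U_{2,n}`, `n ≥ 2`. -/
theorem gpc_hyperplanes_rank_two (M1 M2 M : Matroid α) [M1.Finite] [M2.Finite]
    (E1 E2 X : Set α) (n : ℕ) (hn : 2 ≤ n)
    (hE1 : M1.E = E1) (hE2 : M2.E = E2) (hX : X = E1 ∩ E2)
    (hres : M1 ↾ X = M2 ↾ X) (hmod : IsModFlat M2 X)
    (hU : RestrIsU2 M2 X n)
    (hM : IsGPC M1 M2 M) :
    ∀ H ⊆ E1 ∪ E2, (IsHyp M H ↔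
      (E1 ⊆ H ∧ IsHyp M2 (H ∩ E2) ∧ X ⊆ H ∩ E2) ∨
      (E2 ⊆ H ∧ IsHyp M1 (H ∩ E1) ∧ X ⊆ H ∩ E1) ∨
      (IsHyp M1 (H ∩ E1) ∧ IsHyp M2 (H ∩ E2) ∧ (H ∩ X).ncard = 1) ∨
      (IsHyp M1 (H ∩ E1) ∧ Disjoint (H ∩ E1) X ∧
        IsCr2Flat M2 (H ∩ E2) ∧ Disjoint (H ∩ E2) X)) := by
  subst hE1; subst hE2; subst hX
  intro H hHE
  haveI hMfin : M.Finite := ⟨by rw [hM.1]; exact M1.ground_finite.union M2.ground_finite⟩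
  have hME : M.E = M1.E ∪ M2.E := hM.1
  have hflatM := hM.2
  have hXE1 : M1.E ∩ M2.E ⊆ M1.E := inter_subset_left
  have hXE2 : M1.E ∩ M2.E ⊆ M2.E := inter_subset_right
  have hind2 : ∀ S ⊆ M1.E ∩ M2.E, (M2.Indep S ↔ S.ncard ≤ 2) := hU.2.2
  have h2X : 2 ≤ (M1.E ∩ M2.E).ncard := by rw [hU.2.1]; exact hn
  have hXfin : (M1.E ∩ M2.E).Finite := M2.ground_finite.subset hXE2
  have hab : ∃ a ∈ M1.E ∩ M2.E, ∃ b ∈ M1.E ∩ M2.E, a ≠ b :=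
    (Set.one_lt_ncard hXfin).mp (by omega)
  have hXne2 : ∀ x : α, M1.E ∩ M2.E ≠ {x} := by
    intro x hx
    rw [hx, ncard_singleton] at h2X
    omega
  have hind1 : ∀ S ⊆ M1.E ∩ M2.E, (M1.Indep S ↔ S.ncard ≤ 2) := by
    intro S hS
    have h1 : M1.Indep S ↔ (M1 ↾ (M1.E ∩ M2.E)).Indep S := by
      rw [restrict_indep_iff]
      exact ⟨fun h => ⟨h, hS⟩, fun h => h.1⟩
    rw [h1, hres, restrict_indep_iff, hind2 S hS]
    exact ⟨fun h => h.1, fun h => ⟨h, hS⟩⟩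
  have hrkX : mRk M2 (M1.E ∩ M2.E) = 2 := u2_rk hXE2 hind2 h2X
  have hmod2 : ∀ F, M2.IsFlat F →
      2 + mRk M2 F = mRk M2 ((M1.E ∩ M2.E) ∩ F) + mRk M2 ((M1.E ∩ M2.E) ∪ F) := by
    intro F hF
    have h := hmod.2 F hF
    rwa [hrkX] at h
  have hdec : ∀ F, M.IsFlat F → F = (F ∩ M1.E) ∪ (F ∩ M2.E) := by
    intro F hF
    have hsub := ((hflatM F).mp hF).1
    ext x
    constructor
    · intro hx
      rcases hsub hx with h | h
      exacts [Or.inl ⟨hx, h⟩, Or.inr ⟨hx, h⟩]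
    · rintro (⟨h, -⟩ | ⟨h, -⟩) <;> exact h
  have hZ12 : ∀ F : Set α, (F ∩ M1.E) ∩ (M1.E ∩ M2.E) = F ∩ (M1.E ∩ M2.E) := by
    intro F; ext x; simp only [mem_inter_iff]; tauto
  have hZ22 : ∀ F : Set α, (F ∩ M2.E) ∩ (M1.E ∩ M2.E) = F ∩ (M1.E ∩ M2.E) := by
    intro F; ext x; simp only [mem_inter_iff]; tauto
  have hmk : ∀ F1 F2, M1.IsFlat F1 → M2.IsFlat F2 →
      F1 ∩ (M1.E ∩ M2.E) = F2 ∩ (M1.E ∩ M2.E) →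
      M.IsFlat (F1 ∪ F2) ∧ (F1 ∪ F2) ∩ M1.E = F1 ∧ (F1 ∪ F2) ∩ M2.E = F2 := by
    intro F1 F2 h1 h2 hagr
    have e1 : (F1 ∪ F2) ∩ M1.E = F1 :=
      union_inter_eq_left h1.subset_ground h2.subset_ground hagr
    have e2 : (F1 ∪ F2) ∩ M2.E = F2 :=
      union_inter_eq_right h1.subset_ground h2.subset_ground hagr
    refine ⟨(hflatM _).mpr ⟨union_subset_union h1.subset_ground h2.subset_ground, ?_, ?_⟩, e1, e2⟩
    · rw [e1]; exact h1
    · rw [e2]; exact h2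
  have hgr1 : M.E ∩ M1.E = M1.E := by rw [hME]; exact inter_eq_right.mpr subset_union_left
  have hgr2 : M.E ∩ M2.E = M2.E := by rw [hME]; exact inter_eq_right.mpr subset_union_right
  constructor
  · intro hH
    have hHflat := hH.1
    obtain ⟨hHE', hH1flat, hH2flat⟩ := (hflatM H).mp hH.1
    have hHdec := hdec H hHflat
    have hmaxM : ∀ G, M.IsFlat G → H ⊂ G → G = M.E :=
      fun G hG hss => hH.eq_ground_of_flat_ssuperset hG hss
    have hHne : H ≠ M.E := hH.ne_ground
    have hssH : ∀ F1 F2 : Set α, (H ∩ M1.E) ⊆ F1 → (H ∩ M2.E) ⊆ F2 →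
        (F1 ∪ F2) ∩ M1.E = F1 → ¬ (F1 ⊆ H ∩ M1.E) → H ⊂ F1 ∪ F2 := by
      intro F1 F2 h1 h2 e1 hnsub
      constructor
      · rw [hHdec]; exact union_subset_union h1 h2
      · intro hsub
        apply hnsub
        intro x hx
        have hx2 : x ∈ (F1 ∪ F2) ∩ M1.E := by rw [e1]; exact hx
        exact ⟨hsub hx2.1, hx2.2⟩
    have hssH2 : ∀ F1 F2 : Set α, (H ∩ M1.E) ⊆ F1 → (H ∩ M2.E) ⊆ F2 →
        (F1 ∪ F2) ∩ M2.E = F2 → ¬ (F2 ⊆ H ∩ M2.E) → H ⊂ F1 ∪ F2 := by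
      intro F1 F2 h1 h2 e2 hnsub
      constructor
      · rw [hHdec]; exact union_subset_union h1 h2
      · intro hsub
        apply hnsub
        intro x hx
        have hx2 : x ∈ (F1 ∪ F2) ∩ M2.E := by rw [e2]; exact hx
        exact ⟨hsub hx2.1, hx2.2⟩
    set c1 := M1.closure ((M1.E ∩ M2.E) ∪ (H ∩ M1.E)) with hc1def
    have hc1flat : M1.IsFlat c1 := closure_flat' M1 _
    have hsubc1 : (M1.E ∩ M2.E) ∪ (H ∩ M1.E) ⊆ M1.E := union_subset hXE1 inter_subset_right
    have hXc1 : M1.E ∩ M2.E ⊆ c1 := subset_union_left.trans (M1.subset_closure _ hsubc1)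
    have hH1c1 : H ∩ M1.E ⊆ c1 := subset_union_right.trans (M1.subset_closure _ hsubc1)
    set c2 := M2.closure ((M1.E ∩ M2.E) ∪ (H ∩ M2.E)) with hc2def
    have hc2flat : M2.IsFlat c2 := closure_flat' M2 _
    have hsubc2 : (M1.E ∩ M2.E) ∪ (H ∩ M2.E) ⊆ M2.E := union_subset hXE2 inter_subset_right
    have hXc2 : M1.E ∩ M2.E ⊆ c2 := subset_union_left.trans (M2.subset_closure _ hsubc2)
    have hH2c2 : H ∩ M2.E ⊆ c2 := subset_union_right.trans (M2.subset_closure _ hsubc2)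
    rcases u2_trichotomy hXE2 hind2 hH2flat with hZ | ⟨z, hzX, hZ⟩ | hZ
    · -- Case A : H ∩ X = ∅
      have hZ' : H ∩ (M1.E ∩ M2.E) = ∅ := by rw [← hZ22 H]; exact hZ
      obtain ⟨a, haX, b, hbX, habne⟩ := hab
      have hH1ne : H ∩ M1.E ≠ M1.E := by
        intro h
        have ha1 : a ∈ H ∩ M1.E := by rw [h]; exact hXE1 haX
        have hm : a ∈ H ∩ (M1.E ∩ M2.E) := ⟨ha1.1, haX⟩
        rw [hZ'] at hm
        exact absurd hm (notMem_empty a)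
      have hH2ne : H ∩ M2.E ≠ M2.E := by
        intro h
        have ha1 : a ∈ H ∩ M2.E := by rw [h]; exact hXE2 haX
        have hm : a ∈ H ∩ (M1.E ∩ M2.E) := ⟨ha1.1, haX⟩
        rw [hZ'] at hm
        exact absurd hm (notMem_empty a)
      have hkey1 : ∀ G1, M1.IsFlat G1 → H ∩ M1.E ⊂ G1 → G1 = M1.E := by
        intro G1 hG1 hss1
        rcases u2_trichotomy hXE1 hind1 hG1 with hW | ⟨x, hxX, hW⟩ | hW
        · exfalso
          have hagr : G1 ∩ (M1.E ∩ M2.E) = (H ∩ M2.E) ∩ (M1.E ∩ M2.E) := by rw [hW, hZ]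
          obtain ⟨hFflat, hFe1, hFe2⟩ := hmk G1 (H ∩ M2.E) hG1 hH2flat hagr
          have hssf : H ⊂ G1 ∪ (H ∩ M2.E) :=
            hssH _ _ hss1.subset (subset_refl _) hFe1 hss1.not_subset
          have hFE := hmaxM _ hFflat hssf
          apply hH2ne
          rw [← hFe2, hFE, hgr2]
        · exfalso
          set c := M2.closure (insert x (H ∩ M2.E)) with hcdef
          have hcflat : M2.IsFlat c := closure_flat' M2 _
          have hins : insert x (H ∩ M2.E) ⊆ M2.E := insert_subset (hXE2 hxX) inter_subset_right
          have hxc : x ∈ c := M2.mem_closure_of_mem (mem_insert _ _) hins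
          have hH2c : H ∩ M2.E ⊆ c := (subset_insert _ _).trans (M2.subset_closure _ hins)
          have hcX : c ∩ (M1.E ∩ M2.E) = {x} := by
            rcases u2_trichotomy hXE2 hind2 hcflat with h | ⟨w, hwX, h⟩ | h
            · exfalso
              have hxm : x ∈ c ∩ (M1.E ∩ M2.E) := ⟨hxc, hxX⟩
              rw [h] at hxm
              exact absurd hxm (notMem_empty x)
            · have hxw : x ∈ ({w} : Set α) := by rw [← h]; exact ⟨hxc, hxX⟩
              rw [mem_singleton_iff] at hxw
              rw [h, hxw]
            · exfalso
              have hsubc : (M1.E ∩ M2.E) ∪ (H ∩ M2.E) ⊆ c := union_subset h hH2c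
              have h1 := mRk_mono (N := M2) hsubc
              have h2 : mRk M2 c = mRk M2 (insert x (H ∩ M2.E)) := by
                rw [hcdef]; exact mRk_closure_eq M2 _
              have h3 := mRk_insert_le M2 x (H ∩ M2.E)
              have h4 := hmod2 (H ∩ M2.E) hH2flat
              have h5 : (M1.E ∩ M2.E) ∩ (H ∩ M2.E) = ∅ := by rw [inter_comm]; exact hZ
              rw [h5, mRk_empty] at h4
              omega
          have hagr : G1 ∩ (M1.E ∩ M2.E) = c ∩ (M1.E ∩ M2.E) := by rw [hW, hcX]
          obtain ⟨hFflat, hFe1, hFe2⟩ := hmk G1 c hG1 hcflat hagr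
          have hssf : H ⊂ G1 ∪ c := hssH _ _ hss1.subset hH2c hFe1 hss1.not_subset
          have hFE := hmaxM _ hFflat hssf
          have hcE : c = M2.E := by rw [← hFe2, hFE, hgr2]
          apply hXne2 x
          rw [← hcX, hcE]
          exact (inter_eq_right.mpr hXE2).symm
        · have hagr : G1 ∩ (M1.E ∩ M2.E) = c2 ∩ (M1.E ∩ M2.E) := by
            rw [inter_eq_right.mpr hW, inter_eq_right.mpr hXc2]
          obtain ⟨hFflat, hFe1, hFe2⟩ := hmk G1 c2 hG1 hc2flat hagr
          have hssf : H ⊂ G1 ∪ c2 := hssH _ _ hss1.subset hH2c2 hFe1 hss1.not_subset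
          have hFE := hmaxM _ hFflat hssf
          rw [← hFe1, hFE, hgr1]
      have hcr2 : IsCr2Flat M2 (H ∩ M2.E) := by
        refine ⟨hH2flat, ?_⟩
        have hagr : M1.E ∩ (M1.E ∩ M2.E) = c2 ∩ (M1.E ∩ M2.E) := by
          rw [inter_eq_right.mpr hXE1, inter_eq_right.mpr hXc2]
        obtain ⟨hFflat, hFe1, hFe2⟩ := hmk M1.E c2 M1.ground_isFlat hc2flat hagr
        have hssf : H ⊂ M1.E ∪ c2 := hssH _ _ inter_subset_right hH2c2 hFe1
          (fun h => hH1ne (subset_antisymm inter_subset_right h))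
        have hFE := hmaxM _ hFflat hssf
        have hc2E : c2 = M2.E := by rw [← hFe2, hFE, hgr2]
        have h4 := hmod2 (H ∩ M2.E) hH2flat
        have h5 : (M1.E ∩ M2.E) ∩ (H ∩ M2.E) = ∅ := by rw [inter_comm]; exact hZ
        rw [h5, mRk_empty] at h4
        have h6 : mRk M2 c2 = mRk M2 ((M1.E ∩ M2.E) ∪ (H ∩ M2.E)) := by
          rw [hc2def]; exact mRk_closure_eq M2 _
        rw [hc2E] at h6
        have h7 : mRank M2 = mRk M2 M2.E := rfl
        omega
      refine Or.inr (Or.inr (Or.inr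
        ⟨isHyp_of_maximal_proper_flat hH1flat hH1ne hkey1, ?_, hcr2, ?_⟩))
      · exact disjoint_iff_inter_eq_empty.mpr (by rw [hZ12 H]; exact hZ')
      · exact disjoint_iff_inter_eq_empty.mpr hZ
    · -- Case B : H ∩ X = {z}
      have hZ' : H ∩ (M1.E ∩ M2.E) = {z} := by rw [← hZ22 H]; exact hZ
      have hZ1' : (H ∩ M1.E) ∩ (M1.E ∩ M2.E) = {z} := by rw [hZ12 H]; exact hZ'
      have hzH : z ∈ H := by
        have hm : z ∈ H ∩ (M1.E ∩ M2.E) := by rw [hZ']; rfl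
        exact hm.1
      have hH1ne : H ∩ M1.E ≠ M1.E := by
        intro h
        apply hXne2 z
        apply subset_antisymm ?_ (by rintro y rfl; exact hzX)
        intro y hy
        have hy1 : y ∈ H ∩ M1.E := by rw [h]; exact hXE1 hy
        have hm : y ∈ (H ∩ M1.E) ∩ (M1.E ∩ M2.E) := ⟨hy1, hy⟩
        rw [hZ1'] at hm
        exact hm
      have hH2ne : H ∩ M2.E ≠ M2.E := by
        intro h
        apply hXne2 z
        apply subset_antisymm ?_ (by rintro y rfl; exact hzX)
        intro y hy
        have hy1 : y ∈ H ∩ M2.E := by rw [h]; exact hXE2 hy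
        have hm : y ∈ (H ∩ M2.E) ∩ (M1.E ∩ M2.E) := ⟨hy1, hy⟩
        rw [hZ] at hm
        exact hm
      have hkey1 : ∀ G1, M1.IsFlat G1 → H ∩ M1.E ⊂ G1 → G1 = M1.E := by
        intro G1 hG1 hss1
        have hzG1 : z ∈ G1 ∩ (M1.E ∩ M2.E) := ⟨hss1.subset ⟨hzH, hXE1 hzX⟩, hzX⟩
        rcases u2_trichotomy hXE1 hind1 hG1 with hW | ⟨x, hxX, hW⟩ | hW
        · exfalso
          rw [hW] at hzG1
          exact absurd hzG1 (notMem_empty z)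
        · exfalso
          have hzw : z ∈ ({x} : Set α) := by rw [← hW]; exact hzG1
          rw [mem_singleton_iff] at hzw
          have hagr : G1 ∩ (M1.E ∩ M2.E) = (H ∩ M2.E) ∩ (M1.E ∩ M2.E) := by
            rw [hW, hZ, hzw]
          obtain ⟨hFflat, hFe1, hFe2⟩ := hmk G1 (H ∩ M2.E) hG1 hH2flat hagr
          have hssf : H ⊂ G1 ∪ (H ∩ M2.E) :=
            hssH _ _ hss1.subset (subset_refl _) hFe1 hss1.not_subset
          have hFE := hmaxM _ hFflat hssf
          apply hH2ne
          rw [← hFe2, hFE, hgr2]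
        · have hagr : G1 ∩ (M1.E ∩ M2.E) = c2 ∩ (M1.E ∩ M2.E) := by
            rw [inter_eq_right.mpr hW, inter_eq_right.mpr hXc2]
          obtain ⟨hFflat, hFe1, hFe2⟩ := hmk G1 c2 hG1 hc2flat hagr
          have hssf : H ⊂ G1 ∪ c2 := hssH _ _ hss1.subset hH2c2 hFe1 hss1.not_subset
          have hFE := hmaxM _ hFflat hssf
          rw [← hFe1, hFE, hgr1]
      have hkey2 : ∀ G2, M2.IsFlat G2 → H ∩ M2.E ⊂ G2 → G2 = M2.E := by
        intro G2 hG2 hss2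
        have hzG2 : z ∈ G2 ∩ (M1.E ∩ M2.E) := ⟨hss2.subset ⟨hzH, hXE2 hzX⟩, hzX⟩
        rcases u2_trichotomy hXE2 hind2 hG2 with hW | ⟨x, hxX, hW⟩ | hW
        · exfalso
          rw [hW] at hzG2
          exact absurd hzG2 (notMem_empty z)
        · exfalso
          have hzw : z ∈ ({x} : Set α) := by rw [← hW]; exact hzG2
          rw [mem_singleton_iff] at hzw
          have hagr : (H ∩ M1.E) ∩ (M1.E ∩ M2.E) = G2 ∩ (M1.E ∩ M2.E) := by
            rw [hZ1', hW, hzw]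
          obtain ⟨hFflat, hFe1, hFe2⟩ := hmk (H ∩ M1.E) G2 hH1flat hG2 hagr
          have hssf : H ⊂ (H ∩ M1.E) ∪ G2 :=
            hssH2 _ _ (subset_refl _) hss2.subset hFe2 hss2.not_subset
          have hFE := hmaxM _ hFflat hssf
          apply hH1ne
          rw [← hFe1, hFE, hgr1]
        · have hagr : c1 ∩ (M1.E ∩ M2.E) = G2 ∩ (M1.E ∩ M2.E) := by
            rw [inter_eq_right.mpr hXc1, inter_eq_right.mpr hW]
          obtain ⟨hFflat, hFe1, hFe2⟩ := hmk c1 G2 hc1flat hG2 hagr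
          have hssf : H ⊂ c1 ∪ G2 := hssH2 _ _ hH1c1 hss2.subset hFe2 hss2.not_subset
          have hFE := hmaxM _ hFflat hssf
          rw [← hFe2, hFE, hgr2]
      refine Or.inr (Or.inr (Or.inl
        ⟨isHyp_of_maximal_proper_flat hH1flat hH1ne hkey1,
         isHyp_of_maximal_proper_flat hH2flat hH2ne hkey2, ?_⟩))
      rw [hZ']
      exact ncard_singleton z
    · -- Case C : X ⊆ H
      have hXH : M1.E ∩ M2.E ⊆ H := hZ.trans inter_subset_left
      have hone : H ∩ M1.E = M1.E ∨ H ∩ M2.E = M2.E := by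
        by_contra hcon
        push_neg at hcon
        obtain ⟨h1ne, h2ne⟩ := hcon
        have hagr : M1.E ∩ (M1.E ∩ M2.E) = (H ∩ M2.E) ∩ (M1.E ∩ M2.E) := by
          rw [inter_eq_right.mpr hXE1, inter_eq_right.mpr hZ]
        obtain ⟨hFflat, hFe1, hFe2⟩ := hmk M1.E (H ∩ M2.E) M1.ground_isFlat hH2flat hagr
        have hssf : H ⊂ M1.E ∪ (H ∩ M2.E) := hssH _ _ inter_subset_right (subset_refl _) hFe1
          (fun h => h1ne (subset_antisymm inter_subset_right h))
        have hFE := hmaxM _ hFflat hssf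
        apply h2ne
        rw [← hFe2, hFE, hgr2]
      rcases hone with h1 | h2
      · have hH2ne : H ∩ M2.E ≠ M2.E := by
          intro h2
          apply hHne
          rw [hHdec, h1, h2, hME]
        have hkey2 : ∀ G2, M2.IsFlat G2 → H ∩ M2.E ⊂ G2 → G2 = M2.E := by
          intro G2 hG2 hss2
          have hXG2 : M1.E ∩ M2.E ⊆ G2 := hZ.trans hss2.subset
          have hagr : M1.E ∩ (M1.E ∩ M2.E) = G2 ∩ (M1.E ∩ M2.E) := by
            rw [inter_eq_right.mpr hXE1, inter_eq_right.mpr hXG2]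
          obtain ⟨hFflat, hFe1, hFe2⟩ := hmk M1.E G2 M1.ground_isFlat hG2 hagr
          have hssf : H ⊂ M1.E ∪ G2 :=
            hssH2 _ _ inter_subset_right hss2.subset hFe2 hss2.not_subset
          have hFE := hmaxM _ hFflat hssf
          rw [← hFe2, hFE, hgr2]
        exact Or.inl ⟨by rw [← h1]; exact inter_subset_left,
          isHyp_of_maximal_proper_flat hH2flat hH2ne hkey2, hZ⟩
      · have hH1ne : H ∩ M1.E ≠ M1.E := by
          intro h1
          apply hHne
          rw [hHdec, h1, h2, hME]
        have hXH1 : M1.E ∩ M2.E ⊆ H ∩ M1.E := fun y hy => ⟨hXH hy, hXE1 hy⟩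
        have hkey1 : ∀ G1, M1.IsFlat G1 → H ∩ M1.E ⊂ G1 → G1 = M1.E := by
          intro G1 hG1 hss1
          have hXG1 : M1.E ∩ M2.E ⊆ G1 := hXH1.trans hss1.subset
          have hagr : G1 ∩ (M1.E ∩ M2.E) = M2.E ∩ (M1.E ∩ M2.E) := by
            rw [inter_eq_right.mpr hXG1, inter_eq_right.mpr hXE2]
          obtain ⟨hFflat, hFe1, hFe2⟩ := hmk G1 M2.E hG1 M2.ground_isFlat hagr
          have hssf : H ⊂ G1 ∪ M2.E :=
            hssH _ _ hss1.subset inter_subset_right hFe1 hss1.not_subset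
          have hFE := hmaxM _ hFflat hssf
          rw [← hFe1, hFE, hgr1]
        exact Or.inr (Or.inl ⟨by rw [← h2]; exact inter_subset_left,
          isHyp_of_maximal_proper_flat hH1flat hH1ne hkey1, hXH1⟩)
  · intro hrhs
    have hcompeq : ∀ G, M.IsFlat G → M.IsFlat H → H ⊆ G →
        G ∩ M1.E = H ∩ M1.E → G ∩ M2.E = H ∩ M2.E → G = H := by
      intro G hG hHf hsub e1 e2
      rw [hdec G hG, e1, e2, ← hdec H hHf]
    rcases hrhs with ⟨hE1H, hhyp2, hXH2⟩ | ⟨hE2H, hhyp1, hXH1⟩ |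
      ⟨hhyp1, hhyp2, hcard⟩ | ⟨hhyp1, hdisj1, hcr2, hdisj2⟩
    · -- Case 1 : E1 ⊆ H, H ∩ E2 a hyperplane of M2 containing X
      have hH1 : H ∩ M1.E = M1.E := inter_eq_right.mpr hE1H
      have hHflat : M.IsFlat H := (hflatM H).mpr ⟨hHE, by rw [hH1]; exact M1.ground_isFlat, hhyp2.1⟩
      have hne : H ≠ M.E := by
        intro h
        apply hhyp2.ne_ground
        rw [h, hgr2]
      refine isHyp_of_maximal_proper_flat hHflat hne ?_
      intro G hG hss
      obtain ⟨-, hG1flat, hG2flat⟩ := (hflatM G).mp hG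
      have hG1 : G ∩ M1.E = M1.E := inter_eq_right.mpr ((hE1H.trans hss.subset))
      by_cases h : G ∩ M2.E = H ∩ M2.E
      · exact absurd (hcompeq G hG hHflat hss.subset (by rw [hG1, hH1]) h) hss.ne'
      · have h2 : G ∩ M2.E = M2.E := hhyp2.eq_ground_of_flat_ssuperset hG2flat
          (ssubset_of_subset_of_ne (inter_subset_inter_left _ hss.subset) (Ne.symm h))
        rw [hdec G hG, hG1, h2, hME]
    · -- Case 2 : E2 ⊆ H, H ∩ E1 a hyperplane of M1 containing X
      have hH2 : H ∩ M2.E = M2.E := inter_eq_right.mpr hE2H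
      have hHflat : M.IsFlat H := (hflatM H).mpr ⟨hHE, hhyp1.1, by rw [hH2]; exact M2.ground_isFlat⟩
      have hne : H ≠ M.E := by
        intro h
        apply hhyp1.ne_ground
        rw [h, hgr1]
      refine isHyp_of_maximal_proper_flat hHflat hne ?_
      intro G hG hss
      obtain ⟨-, hG1flat, hG2flat⟩ := (hflatM G).mp hG
      have hG2 : G ∩ M2.E = M2.E := inter_eq_right.mpr ((hE2H.trans hss.subset))
      by_cases h : G ∩ M1.E = H ∩ M1.E
      · exact absurd (hcompeq G hG hHflat hss.subset h (by rw [hG2, hH2])) hss.ne'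
      · have h1 : G ∩ M1.E = M1.E := hhyp1.eq_ground_of_flat_ssuperset hG1flat
          (ssubset_of_subset_of_ne (inter_subset_inter_left _ hss.subset) (Ne.symm h))
        rw [hdec G hG, hG2, h1, hME]
    · -- Case 3 : both hyperplanes, |H ∩ X| = 1
      obtain ⟨z, hz⟩ := ncard_eq_one.mp hcard
      have hzH : z ∈ H := by
        have : z ∈ H ∩ (M1.E ∩ M2.E) := by rw [hz]; rfl
        exact this.1
      have hzX : z ∈ M1.E ∩ M2.E := by
        have : z ∈ H ∩ (M1.E ∩ M2.E) := by rw [hz]; rfl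
        exact this.2
      have hHflat : M.IsFlat H := (hflatM H).mpr ⟨hHE, hhyp1.1, hhyp2.1⟩
      have hne : H ≠ M.E := by
        intro h
        apply hhyp1.ne_ground
        rw [h, hgr1]
      have hXnH2 : ¬ (M1.E ∩ M2.E) ⊆ H ∩ M2.E := by
        intro hsub
        apply hXne2 z
        apply subset_antisymm ?_ (by rintro y rfl; exact hzX)
        intro y hy
        have : y ∈ H ∩ (M1.E ∩ M2.E) := ⟨(hsub hy).1, hy⟩
        rw [hz] at this
        exact this
      refine isHyp_of_maximal_proper_flat hHflat hne ?_
      intro G hG hss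
      obtain ⟨-, hG1flat, hG2flat⟩ := (hflatM G).mp hG
      by_cases h : G ∩ M1.E = H ∩ M1.E
      · exfalso
        have hne2 : G ∩ M2.E ≠ H ∩ M2.E := by
          intro h2
          exact hss.ne' (hcompeq G hG hHflat hss.subset h h2)
        have h2 : G ∩ M2.E = M2.E := hhyp2.eq_ground_of_flat_ssuperset hG2flat
          (ssubset_of_subset_of_ne (inter_subset_inter_left _ hss.subset) (Ne.symm hne2))
        apply hXne2 z
        have e1 : G ∩ (M1.E ∩ M2.E) = H ∩ (M1.E ∩ M2.E) := by
          rw [← hZ12 G, h, hZ12 H]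
        have e2 : G ∩ (M1.E ∩ M2.E) = M1.E ∩ M2.E := by
          rw [← hZ22 G, h2]
          exact inter_eq_right.mpr hXE2
        rw [← e2, e1, hz]
      · have h1 : G ∩ M1.E = M1.E := hhyp1.eq_ground_of_flat_ssuperset hG1flat
          (ssubset_of_subset_of_ne (inter_subset_inter_left _ hss.subset) (Ne.symm h))
        have hXG : M1.E ∩ M2.E ⊆ G := by
          intro y hy
          have : y ∈ G ∩ M1.E := by rw [h1]; exact hy.1
          exact this.1
        have hssub2 : H ∩ M2.E ⊂ G ∩ M2.E := by
          refine ssubset_of_subset_of_ne (inter_subset_inter_left _ hss.subset) ?_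
          intro he
          apply hXnH2
          rw [he]
          exact fun y hy => ⟨hXG hy, hy.2⟩
        have h2 : G ∩ M2.E = M2.E := hhyp2.eq_ground_of_flat_ssuperset hG2flat hssub2
        rw [hdec G hG, h1, h2, hME]
    · -- Case 4 : hyperplane disjoint from X, corank-2 flat disjoint from X
      have hd1 : (H ∩ M1.E) ∩ (M1.E ∩ M2.E) = ∅ := disjoint_iff_inter_eq_empty.mp hdisj1
      have hHflat : M.IsFlat H := (hflatM H).mpr ⟨hHE, hhyp1.1, hcr2.1⟩
      have hne : H ≠ M.E := by
        intro h
        apply hhyp1.ne_ground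
        rw [h, hgr1]
      refine isHyp_of_maximal_proper_flat hHflat hne ?_
      intro G hG hss
      obtain ⟨-, hG1flat, hG2flat⟩ := (hflatM G).mp hG
      have hrk2 : mRank M2 = mRk M2 M2.E := rfl
      have hmodH2 := hmod2 (H ∩ M2.E) hcr2.1
      have hd2 : (M1.E ∩ M2.E) ∩ (H ∩ M2.E) = ∅ := by
        rw [inter_comm]
        exact disjoint_iff_inter_eq_empty.mp hdisj2
      rw [hd2, mRk_empty] at hmodH2
      by_cases h : G ∩ M1.E = H ∩ M1.E
      · exfalso
        have hne2 : G ∩ M2.E ≠ H ∩ M2.E := by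
          intro h2
          exact hss.ne' (hcompeq G hG hHflat hss.subset h h2)
        have hssub2 : H ∩ M2.E ⊂ G ∩ M2.E :=
          ssubset_of_subset_of_ne (inter_subset_inter_left _ hss.subset) (Ne.symm hne2)
        have hlt := mRk_lt_of_flat_ssubset hcr2.1 hG2flat hssub2
        have hmodG2 := hmod2 (G ∩ M2.E) hG2flat
        have hdG : (M1.E ∩ M2.E) ∩ (G ∩ M2.E) = ∅ := by
          rw [inter_comm, hZ22 G, ← hZ12 G, h, hZ12 H, ← hZ12 H, hd1]
        rw [hdG, mRk_empty] at hmodG2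
        have hle := mRk_le_mRank M2 ((M1.E ∩ M2.E) ∪ (G ∩ M2.E))
        have hc := hcr2.2
        omega
      · have h1 : G ∩ M1.E = M1.E := hhyp1.eq_ground_of_flat_ssuperset hG1flat
          (ssubset_of_subset_of_ne (inter_subset_inter_left _ hss.subset) (Ne.symm h))
        have hXG2 : (M1.E ∩ M2.E) ∪ (H ∩ M2.E) ⊆ G ∩ M2.E := by
          apply union_subset
          · intro y hy
            have : y ∈ G ∩ M1.E := by rw [h1]; exact hy.1
            exact ⟨this.1, hy.2⟩
          · exact inter_subset_inter_left _ hss.subset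
        have hge := mRk_mono (N := M2) hXG2
        have hc := hcr2.2
        have h2 : G ∩ M2.E = M2.E :=
          flat_eq_ground_of_mRank_le hG2flat (by omega)
        rw [hdec G hG, h1, h2, hME]
end RankTheory
end
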